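/- Equality case in the composition bound: for real k₁, k₂ ∈ [0,1), the quantity |(μ + τν)/(1 + τ conj(μ)ν)| with |μ| = k₁, |ν| = k₂, |τ| = 1 achieves its maximum value (k₁+k₂)/(1+k₁k₂) exactly when τν is a nonnegative real multiple of μ (i.e., τν·conj(μ) is a nonnegative real number), or when μ = 0. -/

import Mathlib

/-!
Put `a = μ` and `b = τν`. The identity `|1 + ā b|² = |a + b|² + (1 - |a|²)(1 - |b|²)` and its real
shadow `(1 + k₁k₂)² = (k₁ + k₂)² + (1 - k₁²)(1 - k₂²)` share the positive defect
`(1 - k₁²)(1 - k₂²)`, so the quotient attains `(k₁ + k₂)/(1 + k₁k₂)` exactly when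
`|a + b| = |a| + |b|`, i.e. when `b ā` is a nonnegative real; this already covers `μ = 0`.
-/

open Complex ComplexConjugate ComplexOrder

theorem Complex.sq_norm_one_add_conj_mul (a b : ℂ) :
    ‖1 + conj a * b‖ ^ 2 = ‖a + b‖ ^ 2 + (1 - ‖a‖ ^ 2) * (1 - ‖b‖ ^ 2) := by
  simp only [Complex.sq_norm, normSq_apply, add_re, add_im, mul_re, mul_im, conj_re, conj_im,
    one_re, one_im]
  ring

theorem Complex.norm_add_eq_add_norm_iff_nonneg_mul_conj (a b : ℂ) :
    ‖a + b‖ = ‖a‖ + ‖b‖ ↔ 0 ≤ b * conj a := by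
  have hsq : ‖a + b‖ ^ 2 = ‖a‖ ^ 2 + ‖b‖ ^ 2 + 2 * (b * conj a).re := by
    simp only [Complex.sq_norm, normSq_apply, add_re, add_im, mul_re, conj_re, conj_im]
    ring
  rw [← re_eq_norm, norm_mul, norm_conj, ← sq_eq_sq₀ (norm_nonneg _) (by positivity), hsq]
  constructor <;> intro h
  · linear_combination h / 2
  · linear_combination 2 * h

theorem div_eq_div_iff_eq_of_sq_eq_sq_add {N D K M P : ℝ} (hN : 0 ≤ N) (hK : 0 ≤ K)
    (hD : 0 ≤ D) (hM : 0 ≤ M) (hP : 0 < P) (hDN : D ^ 2 = N ^ 2 + P) (hMK : M ^ 2 = K ^ 2 + P) :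
    N / D = K / M ↔ N = K := by
  have hD0 : 0 < D := by nlinarith
  have hM0 : 0 < M := by nlinarith
  rw [div_eq_div_iff hD0.ne' hM0.ne', ← sq_eq_sq₀ (by positivity) (by positivity),
    ← sq_eq_sq₀ hN hK, mul_pow, mul_pow, hDN, hMK]
  constructor
  · intro h
    exact mul_right_cancel₀ hP.ne' (by linear_combination h)
  · intro h
    rw [h]

theorem Complex.norm_div_one_add_conj_mul_eq_iff {a b : ℂ} (ha : ‖a‖ < 1) (hb : ‖b‖ < 1) :
    ‖(a + b) / (1 + conj a * b)‖ = (‖a‖ + ‖b‖) / (1 + ‖a‖ * ‖b‖) ↔ ‖a + b‖ = ‖a‖ + ‖b‖ := by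
  have hP : 0 < (1 - ‖a‖ ^ 2) * (1 - ‖b‖ ^ 2) :=
    mul_pos (by nlinarith [norm_nonneg a]) (by nlinarith [norm_nonneg b])
  rw [norm_div]
  exact div_eq_div_iff_eq_of_sq_eq_sq_add (norm_nonneg _) (by positivity) (norm_nonneg _)
    (by positivity) hP (sq_norm_one_add_conj_mul a b) (by ring)

/-- Equality case in the composition bound: with `|μ| = k₁ < 1`, `|ν| = k₂ < 1`
and `|τ| = 1`, the norm of `w = (μ + τν)/(1 + τ conj(μ) ν)` equals the maximal
value `(k₁ + k₂)/(1 + k₁k₂)` exactly when `τν·conj(μ)` is a nonnegative real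
number, or when `μ = 0`. -/
theorem beltrami_composition_equality_case
    (k₁ k₂ : ℝ) (hk₁ : k₁ < 1) (hk₂ : k₂ < 1)
    (μ ν τ : ℂ) (hμ : ‖μ‖ = k₁) (hν : ‖ν‖ = k₂)
    (hτ : ‖τ‖ = 1) :
    ‖(μ + τ * ν) / (1 + τ * (starRingEnd ℂ) μ * ν)‖ =
        (k₁ + k₂) / (1 + k₁ * k₂) ↔
      (∃ r : ℝ, 0 ≤ r ∧ τ * ν * (starRingEnd ℂ) μ = (r : ℂ)) ∨ μ = 0 := by
  subst hμ hν
  have hτν : ‖τ * ν‖ = ‖ν‖ := by rw [norm_mul, hτ, one_mul]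
  rw [show τ * conj μ * ν = conj μ * (τ * ν) by ring, ← hτν,
    norm_div_one_add_conj_mul_eq_iff hk₁ (hτν ▸ hk₂), norm_add_eq_add_norm_iff_nonneg_mul_conj]
  refine ⟨fun h => Or.inl ⟨_, (nonneg_iff.1 h).1, eq_re_of_ofReal_le (by rwa [ofReal_zero])⟩, ?_⟩
  rintro (⟨r, hr, hz⟩ | rfl)
  · exact hz ▸ zero_le_real.2 hr
  · simp
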